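/- Let A and B be closed subsets of a metric space X and let x̄ ∈ A ∩ B. Then A and B are tangentially transversal at x̄ if and only if there exist δ > 0 and κ > 0 such that for any two different points x ∈ A ∩ B_δ(x̄) and y ∈ B ∩ B_δ(x̄), the slope of the coupling function satisfies |∇φ|(x, y) = limsup_{(u,v)→(x,y)} max{φ(x,y) − φ(u,v), 0} / d((x,y),(u,v)) ≥ κ. -/
import Mathlib


open Metric Set
open scoped ENNReal

/-- Tangential transversality of closed sets `A`, `B` at a point `x0 ∈ A ∩ B`. -/
def TangTrans {X : Type*} [MetricSpace X] (A B : Set X) (x0 : X) : Prop :=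
  ∃ M > 0, ∃ δ > 0, ∃ η > 0,
    ∀ xA ∈ Metric.closedBall x0 δ ∩ A, ∀ xB ∈ Metric.closedBall x0 δ ∩ B, xA ≠ xB →
      ∃ t : ℕ → ℝ, ∃ xa : ℕ → X, ∃ xb : ℕ → X,
        (∀ m, 0 < t m) ∧ Filter.Tendsto t Filter.atTop (nhds 0) ∧
        (∀ m, xa m ∈ A) ∧ (∀ m, xb m ∈ B) ∧
        ∀ m, dist (xa m) xA ≤ t m * M ∧ dist (xb m) xB ≤ t m * M ∧
          dist (xa m) (xb m) ≤ dist xA xB - t m * η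

/-- `setInd S x` is `0` if `x ∈ S` and `+∞` otherwise (indicator in `ℝ≥0∞`). -/
noncomputable def setInd {X : Type*} (S : Set X) (x : X) : ℝ≥0∞ :=
  ⨅ (_ : x ∈ S), 0

/-- The coupling function `φ(x,y) = δ_A(x) + d(x,y) + δ_B(y)` of the sets `A` and `B`. -/
noncomputable def coupling {X : Type*} [MetricSpace X] (A B : Set X) (p : X × X) : ℝ≥0∞ :=
  setInd A p.1 + ENNReal.ofReal (dist p.1 p.2) + setInd B p.2

/-- The nonlocal slope `|∇φ|◇(x,y)` of the coupling function of `A` and `B`,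
with `X × X` carrying the sum metric. -/
noncomputable def couplingNLSlope {X : Type*} [MetricSpace X] (A B : Set X) (x y : X) : ℝ≥0∞ :=
  ⨆ (p : X × X) (_ : p ≠ (x, y)),
    (coupling A B (x, y) - coupling A B p) / ENNReal.ofReal (dist x p.1 + dist y p.2)

/-- The (local) slope `|∇φ|(x,y)` of the coupling function of `A` and `B`,
with `X × X` carrying the sum metric. -/
noncomputable def couplingSlope {X : Type*} [MetricSpace X] (A B : Set X) (x y : X) : ℝ≥0∞ :=
  Filter.limsup
    (fun p : X × X =>
      (coupling A B (x, y) - coupling A B p) / ENNReal.ofReal (dist x p.1 + dist y p.2))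
    (nhdsWithin (x, y) {q | q ≠ (x, y)})

lemma setInd_of_mem {X : Type*} {S : Set X} {x : X} (h : x ∈ S) : setInd S x = 0 := by
  simp [setInd, h]

lemma setInd_of_notMem {X : Type*} {S : Set X} {x : X} (h : x ∉ S) : setInd S x = ⊤ := by
  simp [setInd, h]

lemma coupling_eq {X : Type*} [MetricSpace X] {A B : Set X} {x y : X}
    (hx : x ∈ A) (hy : y ∈ B) :
    coupling A B (x, y) = ENNReal.ofReal (dist x y) := by
  simp [coupling, setInd_of_mem hx, setInd_of_mem hy]

theorem stmt11 {X : Type*} [MetricSpace X]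
    {A B : Set X} (hA : IsClosed A) (hB : IsClosed B) {xbar : X} (hx : xbar ∈ A ∩ B) :
    TangTrans A B xbar ↔
      ∃ δ > 0, ∃ κ > 0, ∀ x ∈ A ∩ Metric.ball xbar δ, ∀ y ∈ B ∩ Metric.ball xbar δ,
        x ≠ y → ENNReal.ofReal κ ≤ couplingSlope A B x y := by
  constructor
  · rintro ⟨M, hM, δ, hδ, η, hη, H⟩
    refine ⟨δ, hδ, η / (2 * M), by positivity, ?_⟩
    rintro x ⟨hxA, hxb⟩ y ⟨hyB, hyb⟩ hxy
    obtain ⟨t, xa, xb, htpos, ht0, hxaA, hxbB, hm⟩ :=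
      H x ⟨ball_subset_closedBall hxb, hxA⟩ y ⟨ball_subset_closedBall hyb, hyB⟩ hxy
    -- the sequence (xa m, xb m) tends to (x, y) within the punctured set
    have htM : Filter.Tendsto (fun m => t m * M) Filter.atTop (nhds 0) := by
      simpa using ht0.mul_const M
    have hxa_t : Filter.Tendsto xa Filter.atTop (nhds x) := by
      refine tendsto_iff_dist_tendsto_zero.2 ?_
      exact squeeze_zero (fun m => dist_nonneg) (fun m => (hm m).1) htM
    have hxb_t : Filter.Tendsto xb Filter.atTop (nhds y) := by
      refine tendsto_iff_dist_tendsto_zero.2 ?_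
      exact squeeze_zero (fun m => dist_nonneg) (fun m => (hm m).2.1) htM
    have hne : ∀ m, (xa m, xb m) ≠ (x, y) := by
      intro m hEq
      have h1 := (hm m).2.2
      rw [Prod.mk.injEq] at hEq
      rw [hEq.1, hEq.2] at h1
      nlinarith [htpos m, hη]
    have hT : Filter.Tendsto (fun m => (xa m, xb m))
        Filter.atTop (nhdsWithin (x, y) {q | q ≠ (x, y)}) := by
      rw [tendsto_nhdsWithin_iff]
      exact ⟨hxa_t.prodMk_nhds hxb_t, Filter.Eventually.of_forall hne⟩
    -- each term of the sequence has quotient ≥ η / (2M)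
    have hq : ∀ m, ENNReal.ofReal (η / (2 * M)) ≤
        (coupling A B (x, y) - coupling A B (xa m, xb m)) /
          ENNReal.ofReal (dist x (xa m) + dist y (xb m)) := by
      intro m
      have hdab : dist (xa m) (xb m) ≤ dist x y - t m * η := (hm m).2.2
      have hnum : ENNReal.ofReal (t m * η) ≤
          coupling A B (x, y) - coupling A B (xa m, xb m) := by
        rw [coupling_eq hxA hyB, coupling_eq (hxaA m) (hxbB m),
          ← ENNReal.ofReal_sub _ dist_nonneg]
        exact ENNReal.ofReal_le_ofReal (by linarith)
      have hden : ENNReal.ofReal (dist x (xa m) + dist y (xb m)) ≤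
          ENNReal.ofReal (2 * (t m * M)) := by
        refine ENNReal.ofReal_le_ofReal ?_
        have h1 : dist x (xa m) ≤ t m * M := by rw [dist_comm]; exact (hm m).1
        have h2 : dist y (xb m) ≤ t m * M := by rw [dist_comm]; exact (hm m).2.1
        linarith
      have htm := htpos m
      have hrs : η / (2 * M) = t m * η / (2 * (t m * M)) := by
        have h0 : t m ≠ 0 := ne_of_gt htm
        have hM0 : M ≠ 0 := ne_of_gt hM
        field_simp
      calc ENNReal.ofReal (η / (2 * M))
          = ENNReal.ofReal (t m * η) / ENNReal.ofReal (2 * (t m * M)) := by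
            rw [hrs, ENNReal.ofReal_div_of_pos (by positivity)]
        _ ≤ _ := ENNReal.div_le_div hnum hden
    refine Filter.le_limsup_of_frequently_le ?_
    exact hT.frequently (Filter.Eventually.frequently (Filter.Eventually.of_forall hq))
  · rintro ⟨δ, hδ, κ, hκ, H⟩
    refine ⟨1, one_pos, δ / 2, by positivity, κ / 2, by positivity, ?_⟩
    rintro xA ⟨hxAb, hxAA⟩ xB ⟨hxBb, hxBB⟩ hne
    have hxAball : xA ∈ A ∩ Metric.ball xbar δ :=
      ⟨hxAA, lt_of_le_of_lt (mem_closedBall.1 hxAb) (by linarith)⟩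
    have hxBball : xB ∈ B ∩ Metric.ball xbar δ :=
      ⟨hxBB, lt_of_le_of_lt (mem_closedBall.1 hxBb) (by linarith)⟩
    have hslope := H xA hxAball xB hxBball hne
    have hlt : ENNReal.ofReal (κ / 2) < couplingSlope A B xA xB :=
      lt_of_lt_of_le ((ENNReal.ofReal_lt_ofReal_iff hκ).2 (by linarith)) hslope
    have hfreq := Filter.frequently_lt_of_lt_limsup (by isBoundedDefault) hlt
    have key : ∀ m : ℕ, ∃ p : X × X, p ≠ (xA, xB) ∧ dist p (xA, xB) < (1/2 : ℝ)^m ∧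
        ENNReal.ofReal (κ / 2) <
          (coupling A B (xA, xB) - coupling A B p) /
            ENNReal.ofReal (dist xA p.1 + dist xB p.2) := by
      intro m
      have hball : ∀ᶠ p in nhdsWithin (xA, xB) {q | q ≠ (xA, xB)},
          dist p (xA, xB) < (1/2 : ℝ)^m :=
        nhdsWithin_le_nhds (Metric.ball_mem_nhds _ (by positivity))
      have hmem : ∀ᶠ p in nhdsWithin (xA, xB) {q | q ≠ (xA, xB)}, p ≠ (xA, xB) :=
        self_mem_nhdsWithin
      obtain ⟨p, ⟨hp1, hp2⟩, hp3⟩ := ((hfreq.and_eventually hball).and_eventually hmem).exists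
      exact ⟨p, hp3, hp2, hp1⟩
    choose p hpne hpdist hplt using key
    -- membership
    have hmemAB : ∀ m, (p m).1 ∈ A ∧ (p m).2 ∈ B := by
      intro m
      by_contra hcon
      have hTop : coupling A B (p m) = ⊤ := by
        rw [not_and_or] at hcon
        rcases hcon with h | h
        · simp [coupling, setInd_of_notMem h]
        · simp [coupling, setInd_of_notMem h]
      have := hplt m
      rw [hTop] at this
      simp only [ENNReal.sub_top, ENNReal.zero_div] at this
      exact absurd this (by simp)
    have htpos : ∀ m, 0 < dist xA (p m).1 + dist xB (p m).2 := by
      intro m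
      rcases lt_or_eq_of_le (add_nonneg (dist_nonneg (x := xA) (y := (p m).1))
        (dist_nonneg (x := xB) (y := (p m).2))) with h | h
      · exact h
      · exfalso
        have h1 : dist xA (p m).1 = 0 ∧ dist xB (p m).2 = 0 := by
          constructor <;> linarith [dist_nonneg (x := xA) (y := (p m).1),
            dist_nonneg (x := xB) (y := (p m).2)]
        exact hpne m (Prod.ext (by rw [← dist_eq_zero, dist_comm]; exact h1.1)
          (by rw [← dist_eq_zero, dist_comm]; exact h1.2))
    -- key real inequality
    have hkey : ∀ m, κ / 2 * (dist xA (p m).1 + dist xB (p m).2) <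
        dist xA xB - dist (p m).1 (p m).2 := by
      intro m
      have hlt' := hplt m
      rw [coupling_eq hxAA hxBB, coupling_eq (hmemAB m).1 (hmemAB m).2,
        ← ENNReal.ofReal_sub _ dist_nonneg] at hlt'
      have hlt2 : ENNReal.ofReal (κ / 2) * ENNReal.ofReal (dist xA (p m).1 + dist xB (p m).2)
          < ENNReal.ofReal (dist xA xB - dist (p m).1 (p m).2) := by
        rw [← ENNReal.lt_div_iff_mul_lt (Or.inl ?h1) (Or.inl ENNReal.ofReal_ne_top)]
        · exact hlt'
        case h1 =>
          simp only [ne_eq, ENNReal.ofReal_eq_zero, not_le]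
          exact htpos m
      rw [← ENNReal.ofReal_mul (by positivity)] at hlt2
      exact (ENNReal.ofReal_lt_ofReal_iff_of_nonneg (by positivity)).1 hlt2
    refine ⟨fun m => dist xA (p m).1 + dist xB (p m).2, fun m => (p m).1, fun m => (p m).2,
      htpos, ?_, fun m => (hmemAB m).1, fun m => (hmemAB m).2, ?_⟩
    · refine squeeze_zero (g := fun m => 2 * (1/2 : ℝ)^m)
        (fun m => le_of_lt (htpos m)) (fun m => ?_) ?_
      · have h1 : dist xA (p m).1 ≤ dist (p m) (xA, xB) := by
          rw [dist_comm xA]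
          exact le_max_left _ _
        have h2 : dist xB (p m).2 ≤ dist (p m) (xA, xB) := by
          rw [dist_comm xB]
          exact le_max_right _ _
        have := hpdist m
        linarith
      · have h3 : Filter.Tendsto (fun m : ℕ => (1/2 : ℝ)^m) Filter.atTop (nhds 0) :=
          tendsto_pow_atTop_nhds_zero_of_lt_one (by norm_num) (by norm_num)
        simpa using h3.const_mul 2
    · intro m
      have hk := hkey m
      refine ⟨?_, ?_, ?_⟩
      · show dist (p m).1 xA ≤ (dist xA (p m).1 + dist xB (p m).2) * 1
        rw [mul_one, dist_comm]
        linarith [dist_nonneg (x := xB) (y := (p m).2)]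
      · show dist (p m).2 xB ≤ (dist xA (p m).1 + dist xB (p m).2) * 1
        rw [mul_one, dist_comm]
        linarith [dist_nonneg (x := xA) (y := (p m).1)]
      · show dist (p m).1 (p m).2 ≤
          dist xA xB - (dist xA (p m).1 + dist xB (p m).2) * (κ / 2)
        nlinarith [htpos m]
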